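/- Let k be an even integer and s ∈ ℂ with 2·Re(s) + k > 3. Then for every Z ∈ ℍ₂, A_k(Z, s) = Σ_{h ∈ Γ_∞\Γ} j(h_•, Z)^{−k} · (δ(h_•(Z)) / Im((h_•(Z))*))^s · E_k((h_•(Z))*, s), where W* denotes the (1,1) entry of W ∈ ℍ₂ (which lies in the upper half-plane ℍ), and E_k(τ, s) := Σ_{g ∈ Γ_∞\Γ} j(g, τ)^{−k} Im(g(τ))^s is the real-analytic Eisenstein series on ℍ (with j([[a,b],[c,d]], τ) = cτ + d and g(τ) the Möbius action); the summand depends only on the coset Γ_∞h and the series converges absolutely. -/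

import Mathlib

open Matrix Complex Filter Topology

noncomputable section

abbrev M2C := Matrix (Fin 2) (Fin 2) ℂ
abbrev M2R := Matrix (Fin 2) (Fin 2) ℝ
abbrev M2Q := Matrix (Fin 2) (Fin 2) ℚ
abbrev M4R := Matrix (Fin 2 ⊕ Fin 2) (Fin 2 ⊕ Fin 2) ℝ

/-- The standard symplectic form of degree 2. -/
def J4 : M4R := Matrix.fromBlocks 0 1 (-1) 0

/-- `g` is a real symplectic matrix of degree 2. -/
def IsSymplectic (g : M4R) : Prop := gᵀ * J4 * g = J4

/-- all entries of `g` are integers -/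
def IsIntegral4 (g : M4R) : Prop := ∀ i j, ∃ n : ℤ, g i j = (n : ℝ)

/-- The Siegel modular group `Γ₂ = Sp₂(ℤ)` (as a set of real matrices). -/
def Sp2Z : Set M4R := {g | IsSymplectic g ∧ IsIntegral4 g}

/-- `Γ_{2,0}`: elements of `Γ₂` whose lower-left 2×2 block is `0`. -/
def Gamma20 : Set M4R := {g | g ∈ Sp2Z ∧ Matrix.toBlocks₂₁ g = 0}

/-- entrywise coercion of a real 4×4 matrix to a complex one -/
def mapC (g : M4R) : Matrix (Fin 2 ⊕ Fin 2) (Fin 2 ⊕ Fin 2) ℂ := g.map (fun x => (x : ℂ))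

/-- The action `g(Z) = (AZ+B)(CZ+D)⁻¹` of `Sp₂(ℝ)` on the Siegel upper half space. -/
def smul4 (g : M4R) (Z : M2C) : M2C :=
  ((mapC g).toBlocks₁₁ * Z + (mapC g).toBlocks₁₂) * ((mapC g).toBlocks₂₁ * Z + (mapC g).toBlocks₂₂)⁻¹

/-- The factor of automorphy `j(g,Z) = det (CZ + D)`. -/
def jfac (g : M4R) (Z : M2C) : ℂ := ((mapC g).toBlocks₂₁ * Z + (mapC g).toBlocks₂₂).det

/-- entrywise imaginary part -/
def ImM (Z : M2C) : M2R := Z.map Complex.im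

/-- The Siegel upper half space of degree 2. -/
def SiegelH2 : Set M2C := {Z | Z.IsSymm ∧ (ImM Z).PosDef}

/-- `δ(Z) := det (Im Z)` -/
def Hdelta (Z : M2C) : ℝ := (ImM Z).det

/-- The summand `j(g,Z)^{-k} δ(g(Z))^s` of the Siegel Eisenstein series. -/
def eisSummand (k : ℤ) (s : ℂ) (g : M4R) (Z : M2C) : ℂ :=
  jfac g Z ^ (-k) * ((Hdelta (smul4 g Z) : ℂ)) ^ s

/-- `Γ = SL₂(ℤ)` as a set of real 2×2 matrices. -/
def SL2Zset : Set M2R := {g | g.det = 1 ∧ ∀ i j, ∃ n : ℤ, g i j = (n : ℝ)}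

/-- `Γ_∞`: upper triangular elements of `SL₂(ℤ)`. -/
def GammaInf : Set M2R := {g | g ∈ SL2Zset ∧ g 1 0 = 0}

/-- The embedding `(A,B) ↦ A × B` of pairs of 2×2 matrices into 4×4 matrices. -/
def emb (A B : M2R) : M4R :=
  Matrix.fromBlocks !![A 0 0, 0; 0, B 0 0] !![A 0 1, 0; 0, B 0 1]
                    !![A 1 0, 0; 0, B 1 0] !![A 1 1, 0; 0, B 1 1]

/-- `g• := g × 1` -/
def embUp (A : M2R) : M4R := emb A 1

/-- `g_• := 1 × g` -/
def embLow (B : M2R) : M4R := emb 1 B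

/-- `χ_{k,s}(g,Z) = j(g,Z)^{-k} |j(g,Z)|^{-2s}` -/
def chiF (k : ℤ) (s : ℂ) (g : M4R) (Z : M2C) : ℂ :=
  jfac g Z ^ (-k) * ((‖jfac g Z‖ : ℂ)) ^ (-(2 * s))

/-- `φ(Z) = τ + 2z + τ'` -/
def phiF (Z : M2C) : ℂ := Z 0 0 + 2 * Z 0 1 + Z 1 1

/-- `Φ_{k,s}(Z) = φ(Z)^{-k} |φ(Z)|^{-2s}` -/
def PhiF (k : ℤ) (s : ℂ) (Z : M2C) : ℂ :=
  phiF Z ^ (-k) * ((‖phiF Z‖ : ℂ)) ^ (-(2 * s))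

/-- The Petersson slash operator `(F|_k g)(Z) = j(g,Z)^{-k} F(g(Z))`. -/
def slashOp (k : ℤ) (g : M4R) (F : M2C → ℂ) (Z : M2C) : ℂ := jfac g Z ^ (-k) * F (smul4 g Z)

/-- The Siegel modular group as a type. -/
def Sp2ZT := {g : M4R // g ∈ Sp2Z}

/-- the left coset relation for `Γ_{2,0} \ Γ₂` -/
def rel20 (g g' : Sp2ZT) : Prop := ∃ γ ∈ Gamma20, g'.1 = γ * g.1

/-- `SL₂(ℤ)` as a type. -/
def SL2ZT := {g : M2R // g ∈ SL2Zset}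

/-- the left coset relation for `Γ_∞ \ Γ` -/
def relInf (g g' : SL2ZT) : Prop := ∃ γ ∈ GammaInf, g'.1 = γ * g.1

/-- a choice of representative of an equivalence class -/
def qout {α : Sort*} {r : α → α → Prop} (q : Quot r) : α := Classical.choose (Quot.exists_rep q)

/-- The real analytic Siegel Eisenstein series of degree 2:
`E_k^{(2)}(Z,s) = Σ_{g ∈ Γ_{2,0}\Γ₂} j(g,Z)^{-k} δ(g(Z))^s`. -/
def Eis (k : ℤ) (s : ℂ) (Z : M2C) : ℂ := ∑' q : Quot rel20, eisSummand k s (qout q).1 Z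

/-- `B_k(Z,s) = δ(Z)^s Σ_{g ∈ Γ} Φ_{k,s}(g_•(Z)) χ_{k,s}(g_•,Z)` -/
def Bk (k : ℤ) (s : ℂ) (W : M2C) : ℂ :=
  ((Hdelta W : ℂ)) ^ s * ∑' g : SL2ZT, PhiF k s (smul4 (embLow g.1) W) * chiF k s (embLow g.1) W

/-- `A_k(Z,s) = δ(Z)^s Σ_{g,h ∈ Γ_∞\Γ} χ_{k,s}(g• h_•, Z)` -/
def Ak (k : ℤ) (s : ℂ) (Z : M2C) : ℂ :=
  ((Hdelta Z : ℂ)) ^ s *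
    ∑' q : Quot relInf × Quot relInf, chiF k s (embUp (qout q.1).1 * embLow (qout q.2).1) Z

/-- The normalized Hecke operator `T_p` applied via the upper embedding `•`. -/
def TpUp (k : ℤ) (p : ℕ) (F : M2C → ℂ) (Z : M2C) : ℂ :=
  (p : ℂ) ^ ((k : ℂ) / 2 - 1) *
    (slashOp k (embUp (((p : ℝ) ^ (-(1:ℝ)/2)) • !![(p:ℝ), 0; 0, 1])) F Z +
      ∑ a : Fin p, slashOp k (embUp (((p : ℝ) ^ (-(1:ℝ)/2)) • !![1, ((a:ℕ):ℝ); 0, (p:ℝ)])) F Z)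

/-- The normalized Hecke operator `T_p` applied via the lower embedding `_•`. -/
def TpLow (k : ℤ) (p : ℕ) (F : M2C → ℂ) (Z : M2C) : ℂ :=
  (p : ℂ) ^ ((k : ℂ) / 2 - 1) *
    (slashOp k (embLow (((p : ℝ) ^ (-(1:ℝ)/2)) • !![(p:ℝ), 0; 0, 1])) F Z +
      ∑ a : Fin p, slashOp k (embLow (((p : ℝ) ^ (-(1:ℝ)/2)) • !![1, ((a:ℕ):ℝ); 0, (p:ℝ)])) F Z)

/-- `SL₂(ℤ)` as a set of rational matrices. -/
def SL2Qint : Set M2Q := {g | g.det = 1 ∧ ∀ i j, ∃ n : ℤ, g i j = (n : ℚ)}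

/-- the left coset `Γ g` in `GL₂(ℚ)` -/
def leftCosetQ (g : M2Q) : Set M2Q := {x | ∃ γ ∈ SL2Qint, x = γ * g}

/-- the double coset `Γ g Γ` in `GL₂(ℚ)` -/
def doubleCosetQ (g : M2Q) : Set M2Q := {x | ∃ γ₁ ∈ SL2Qint, ∃ γ₂ ∈ SL2Qint, x = γ₁ * g * γ₂}

/-- `d_m = [[m,0],[0,m⁻¹]]` -/
def dmQ (m : ℕ) : M2Q := !![(m:ℚ), 0; 0, (m:ℚ)⁻¹]

/-- entrywise coercion `ℚ → ℝ` -/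
def mapR (g : M2Q) : M2R := g.map (fun x => (x : ℝ))

/-- `γ 0, …, γ (r-1)` is a system of representatives for the left cosets of `Γ`
contained in the double coset `Γ d_m Γ`. -/
def IsRepSystem (m : ℕ) (r : ℕ) (γ : Fin r → M2Q) : Prop :=
  (∀ j, γ j ∈ doubleCosetQ (dmQ m)) ∧
  (⋃ j, leftCosetQ (γ j)) = doubleCosetQ (dmQ m) ∧
  (∀ j j', j ≠ j' → Disjoint (leftCosetQ (γ j)) (leftCosetQ (γ j')))

/-- the matrices `g_m` -/
def gmMat (m : ℕ) : M4R :=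
  Matrix.fromBlocks !![0,0;0,1] !![-1,0;0,0] !![1,(m:ℝ);0,0] !![0,0;-(m:ℝ),1]

/-- `J_m = [[0,1/m],[m,0]]` -/
def JmMat (m : ℕ) : M2R := !![0, 1/(m:ℝ); (m:ℝ), 0]

/-- `Γ(m) = {g ∈ Γ : J_m g J_m ∈ Γ}` -/
def GammaM (m : ℕ) : Set M2R := {g | g ∈ SL2Zset ∧ JmMat m * g * JmMat m ∈ SL2Zset}

/-- the left coset `Γ_{2,0} x` -/
def C20 (x : M4R) : Set M4R := {y | ∃ γ ∈ Gamma20, y = γ * x}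

/-- `g^# = [[d,b],[c,a]]` -/
def sharp (g : M2R) : M2R := !![g 1 1, g 0 1; g 1 0, g 0 0]

/-- half-integral symmetric matrix `[[n, r/2],[r/2, m]]` -/
def halfIntMat (n r m : ℤ) : M2R := !![(n:ℝ), (r:ℝ)/2; (r:ℝ)/2, (m:ℝ)]

def IsHalfIntegral (M : M2R) : Prop := ∃ n r m : ℤ, M = halfIntMat n r m

/-- `Z = X + iY` -/
def mkZ (X Y : M2R) : M2C := X.map (fun x => (x:ℂ)) + Complex.I • Y.map (fun x => (x:ℂ))

/-- `j([[a,b],[c,d]], τ) = cτ + d` on the upper half plane -/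
def jSL (g : M2R) (τ : ℂ) : ℂ := (g 1 0 : ℝ) * τ + ((g 1 1 : ℝ) : ℂ)

/-- the Möbius action of `GL₂⁺(ℝ)` on the upper half plane -/
def moeb (g : M2R) (τ : ℂ) : ℂ := (((g 0 0 : ℝ) : ℂ) * τ + ((g 0 1 : ℝ) : ℂ)) / (((g 1 0 : ℝ) : ℂ) * τ + ((g 1 1 : ℝ) : ℂ))

/-- the degree 1 real analytic Eisenstein series `E_k(τ,s) = Σ_{g ∈ Γ_∞\Γ} j(g,τ)^{-k} Im(g(τ))^s` -/
def E1 (k : ℤ) (s : ℂ) (τ : ℂ) : ℂ :=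
  ∑' q : Quot relInf, jSL (qout q).1 τ ^ (-k) * ((((moeb (qout q).1 τ).im : ℝ) : ℂ)) ^ s


/-- the summand `j(h_•,Z)^{-k} (δ(h_•(Z))/Im((h_•(Z))*))^s E_k((h_•(Z))*, s)` -/
noncomputable def AkTerm (k : ℤ) (s : ℂ) (Z : M2C) (g : M2R) : ℂ :=
  jfac (embLow g) Z ^ (-k) *
    (((Hdelta (smul4 (embLow g) Z) / ((smul4 (embLow g) Z) 0 0).im : ℝ)) : ℂ) ^ s *
    E1 k s ((smul4 (embLow g) Z) 0 0)

/-! With `W = h_•(Z)`, the automorphy factor splits as `j(g• h_•, Z) = j(g, W*) j(h, τ')` and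
`δ(W) = δ(Z) / |j(h, τ')|²`, so `δ(Z)^s χ_{k,s}(g• h_•, Z)` is the `h`-part of the summand times
the term `j(g, W*)^{-k} Im(g W*)^s` of `E_k(W*, s)`. Since `W*` stays in the vertical strip
`|Re| ≤ |τ| + |z|²/Im τ'`, `Im ≥ δ(Z)/Im τ'`, both factors are bounded by constant multiples of
`‖(c, d)‖^{-(k + 2 Re s)}` for the bottom rows `(c, d)` of `g` and `h`; this makes the double sum
absolutely convergent, so it may be summed over `g` first. For even `k` the summand does not change
under `h ↦ ±(1 n; 0 1) h`. -/

lemma im_mul_im_sq_mul (w j : ℂ) :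
    j.im * (w ^ 2 * j).im = (w * j).im ^ 2 - w.im ^ 2 * Complex.normSq j := by
  simp only [sq, Complex.mul_im, Complex.mul_re, Complex.normSq_apply]
  ring

lemma cpow_eq_exp_log_mul {r : ℝ} (hr : 0 < r) (w : ℂ) :
    (r : ℂ) ^ w = Complex.exp (Real.log r * w) := by
  rw [Complex.cpow_def_of_ne_zero (Complex.ofReal_ne_zero.mpr hr.ne'), Complex.ofReal_log hr.le]

lemma ofReal_mul_cpow_neg_two_mul_mul_cpow {a b y d : ℝ} (ha : 0 < a) (hb : 0 < b) (hy : 0 < y)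
    (hd : 0 < d) (s : ℂ) :
    ((a * b : ℝ) : ℂ) ^ (-(2 * s)) * (d : ℂ) ^ s =
      ((d / (b ^ 2 * y) : ℝ) : ℂ) ^ s * ((y / a ^ 2 : ℝ) : ℂ) ^ s := by
  rw [cpow_eq_exp_log_mul (by positivity), cpow_eq_exp_log_mul hd,
    cpow_eq_exp_log_mul (by positivity), cpow_eq_exp_log_mul (by positivity),
    ← Complex.exp_add, ← Complex.exp_add,
    Real.log_div hd.ne' (by positivity), Real.log_mul (by positivity) hy.ne',
    Real.log_div hy.ne' (by positivity), Real.log_mul ha.ne' hb.ne', Real.log_pow, Real.log_pow]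
  push_cast
  ring_nf

lemma norm_zpow_neg_mul_cpow_norm (k : ℤ) (s : ℂ) {w : ℂ} (hw : w ≠ 0) :
    ‖w ^ (-k) * (‖w‖ : ℂ) ^ (-(2 * s))‖ = ‖w‖ ^ (-(k + 2 * s.re)) := by
  have hpos : 0 < ‖w‖ := norm_pos_iff.mpr hw
  rw [norm_mul, norm_zpow, Complex.norm_cpow_eq_rpow_re_of_pos hpos, ← Real.rpow_intCast,
    ← Real.rpow_add hpos]
  congr 1
  simp only [Complex.neg_re, Complex.mul_re, Complex.re_ofNat, Complex.im_ofNat]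
  push_cast
  ring

lemma summable_norm_tsum_fst {β γ E : Type*} [NormedAddCommGroup E] [CompleteSpace E]
    {f : β × γ → E} (hf : Summable fun p => ‖f p‖) :
    Summable fun c => ‖∑' b, f (b, c)‖ := by
  have hswap : Summable fun p : γ × β => ‖f p.swap‖ := hf.comp_injective Prod.swap_injective
  exact hswap.prod.of_nonneg_of_le (fun _ => norm_nonneg _) fun c =>
    norm_tsum_le_tsum_norm (hswap.prod_factor c)

section Embedding

variable (A B : M2R)

@[simp] lemma toBlocks₁₁_mapC_emb :
    (mapC (emb A B)).toBlocks₁₁ = !![(A 0 0 : ℂ), 0; 0, (B 0 0 : ℂ)] := by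
  ext i j; fin_cases i <;> fin_cases j <;> simp [mapC, emb, toBlocks₁₁]

@[simp] lemma toBlocks₁₂_mapC_emb :
    (mapC (emb A B)).toBlocks₁₂ = !![(A 0 1 : ℂ), 0; 0, (B 0 1 : ℂ)] := by
  ext i j; fin_cases i <;> fin_cases j <;> simp [mapC, emb, toBlocks₁₂]

@[simp] lemma toBlocks₂₁_mapC_emb :
    (mapC (emb A B)).toBlocks₂₁ = !![(A 1 0 : ℂ), 0; 0, (B 1 0 : ℂ)] := by
  ext i j; fin_cases i <;> fin_cases j <;> simp [mapC, emb, toBlocks₂₁]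

@[simp] lemma toBlocks₂₂_mapC_emb :
    (mapC (emb A B)).toBlocks₂₂ = !![(A 1 1 : ℂ), 0; 0, (B 1 1 : ℂ)] := by
  ext i j; fin_cases i <;> fin_cases j <;> simp [mapC, emb, toBlocks₂₂]

lemma emb_mul_emb (A' B' : M2R) : emb A B * emb A' B' = emb (A * A') (B * B') := by
  simp only [emb, fromBlocks_multiply]
  congr 1 <;> ext i j <;> fin_cases i <;> fin_cases j <;> simp [mul_apply, Fin.sum_univ_two]

lemma embUp_mul_embLow : embUp A * embLow B = emb A B := by
  rw [embUp, embLow, emb_mul_emb, Matrix.one_mul, Matrix.mul_one]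

lemma jfac_emb (Z : M2C) :
    jfac (emb A B) Z = jSL A (Z 0 0) * jSL B (Z 1 1) - A 1 0 * B 1 0 * Z 0 1 * Z 1 0 := by
  rw [jfac, toBlocks₂₁_mapC_emb, toBlocks₂₂_mapC_emb, det_fin_two]
  simp [jSL, vecMul, dotProduct, Fin.sum_univ_two]
  ring

end Embedding

lemma jfac_embLow (g : M2R) (Z : M2C) : jfac (embLow g) Z = jSL g (Z 1 1) := by
  simp [embLow, jfac_emb, jSL]

lemma moeb_eq_div_jSL (g : M2R) (τ : ℂ) : moeb g τ = (g 0 0 * τ + g 0 1) / jSL g τ := rfl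

lemma smul4_embLow {g : M2R} (hg : g.det = 1) {Z : M2C} (hj : jSL g (Z 1 1) ≠ 0) :
    smul4 (embLow g) Z =
      !![Z 0 0 - g 1 0 * Z 0 1 * Z 1 0 / jSL g (Z 1 1), Z 0 1 / jSL g (Z 1 1);
         Z 1 0 / jSL g (Z 1 1), moeb g (Z 1 1)] := by
  have hdet : (g 0 0 : ℂ) * g 1 1 - g 0 1 * g 1 0 = 1 := by
    rw [det_fin_two] at hg; exact_mod_cast hg
  have hjdef : jSL g (Z 1 1) = g 1 0 * Z 1 1 + g 1 1 := rfl
  have hinv : ((mapC (embLow g)).toBlocks₂₁ * Z + (mapC (embLow g)).toBlocks₂₂)⁻¹ =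
      !![1, 0; -(g 1 0 * Z 1 0) / jSL g (Z 1 1), 1 / jSL g (Z 1 1)] := by
    refine inv_eq_right_inv ?_
    ext i j; fin_cases i <;> fin_cases j <;>
      simp only [Matrix.add_apply, mul_apply, Fin.sum_univ_two] <;>
      simp [embLow, ← hjdef, hj, mul_div_assoc', neg_div]
  rw [smul4, hinv, moeb_eq_div_jSL]
  ext i j; fin_cases i <;> fin_cases j <;>
    simp only [Matrix.add_apply, mul_apply, Fin.sum_univ_two] <;> simp [embLow] <;>
    field_simp
  · ring
  · rw [hjdef]; linear_combination Z 1 0 * hdet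

lemma smul4_embLow_zero_zero {g : M2R} (hg : g.det = 1) {Z : M2C} (hj : jSL g (Z 1 1) ≠ 0) :
    smul4 (embLow g) Z 0 0 = Z 0 0 - g 1 0 * Z 0 1 * Z 1 0 / jSL g (Z 1 1) := by
  simp [smul4_embLow hg hj]

lemma jfac_emb_eq_mul {g h : M2R} (hh : h.det = 1) {Z : M2C} (hj : jSL h (Z 1 1) ≠ 0) :
    jfac (emb g h) Z = jSL g (smul4 (embLow h) Z 0 0) * jSL h (Z 1 1) := by
  rw [jfac_emb, smul4_embLow_zero_zero hh hj]
  generalize jSL h (Z 1 1) = j at hj ⊢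
  simp only [jSL]
  field_simp
  ring

lemma jSL_ne_zero {g : M2R} (hg : g.det = 1) {τ : ℂ} (hτ : 0 < τ.im) : jSL g τ ≠ 0 := by
  rw [det_fin_two] at hg
  intro h
  have him : g 1 0 * τ.im = 0 := by simpa [jSL] using congrArg Complex.im h
  have hc : g 1 0 = 0 := by simpa [hτ.ne'] using him
  have hd : g 1 1 = 0 := by simpa [jSL, hc] using h
  simp [hc, hd] at hg

lemma im_jSL (g : M2R) (τ : ℂ) : (jSL g τ).im = g 1 0 * τ.im := by simp [jSL]

lemma im_moeb {g : M2R} (hg : g.det = 1) (τ : ℂ) :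
    (moeb g τ).im = τ.im / Complex.normSq (jSL g τ) := by
  rw [det_fin_two] at hg
  rw [moeb_eq_div_jSL, Complex.div_im, ← sub_div]
  congr 1
  simp only [jSL, Complex.add_im, Complex.add_re, Complex.mul_im, Complex.mul_re,
    Complex.ofReal_re, Complex.ofReal_im]
  linear_combination τ.im * hg

lemma Hdelta_eq (Z : M2C) : Hdelta Z = (Z 0 0).im * (Z 1 1).im - (Z 0 1).im * (Z 1 0).im := by
  simp [Hdelta, ImM, det_fin_two]

section SiegelH2

variable {Z : M2C} {g : M2R}

lemma im_one_one_pos_of_mem_SiegelH2 (hZ : Z ∈ SiegelH2) : 0 < (Z 1 1).im := by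
  simpa [ImM] using hZ.2.diag_pos (i := 1)

lemma Hdelta_pos_of_mem_SiegelH2 (hZ : Z ∈ SiegelH2) : 0 < Hdelta Z := hZ.2.det_pos

lemma apply_one_zero_of_mem_SiegelH2 (hZ : Z ∈ SiegelH2) : Z 1 0 = Z 0 1 := hZ.1.apply 0 1

lemma im_smul4_embLow_mul_im (hg : g.det = 1) (hsymm : Z 1 0 = Z 0 1)
    (hj : jSL g (Z 1 1) ≠ 0) :
    (smul4 (embLow g) Z 0 0).im * (Z 1 1).im =
      Hdelta Z + (Z 0 1 / jSL g (Z 1 1)).im ^ 2 * Complex.normSq (jSL g (Z 1 1)) := by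
  set j := jSL g (Z 1 1)
  set w := Z 0 1 / j
  have hz : Z 0 1 = w * j := by simp [w, hj]
  have hW : smul4 (embLow g) Z 0 0 = Z 0 0 - g 1 0 * (w ^ 2 * j) := by
    rw [smul4_embLow_zero_zero hg hj, hsymm, hz, show jSL g (Z 1 1) = j from rfl]
    field_simp
  have hjim : j.im = g 1 0 * (Z 1 1).im := im_jSL g (Z 1 1)
  rw [hW, Hdelta_eq, hsymm, hz]
  simp only [Complex.sub_im, Complex.im_ofReal_mul]
  linear_combination -(im_mul_im_sq_mul w j) + (w ^ 2 * j).im * hjim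

lemma Hdelta_smul4_embLow (hg : g.det = 1) (hsymm : Z 1 0 = Z 0 1) (hj : jSL g (Z 1 1) ≠ 0) :
    Hdelta (smul4 (embLow g) Z) = Hdelta Z / Complex.normSq (jSL g (Z 1 1)) := by
  have hN : Complex.normSq (jSL g (Z 1 1)) ≠ 0 := by simpa using hj
  have key := im_smul4_embLow_mul_im hg hsymm hj
  rw [smul4_embLow hg hj] at key ⊢
  rw [Hdelta_eq]
  simp only [of_apply, cons_val', cons_val_zero, cons_val_one, empty_val', cons_val_fin_one,
    im_moeb hg, hsymm] at key ⊢
  generalize (Z 0 0 - g 1 0 * Z 0 1 * Z 0 1 / jSL g (Z 1 1)).im = a at key ⊢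
  field_simp
  linear_combination key

lemma div_im_le_im_smul4_embLow (hg : g.det = 1) (hZ : Z ∈ SiegelH2) :
    Hdelta Z / (Z 1 1).im ≤ (smul4 (embLow g) Z 0 0).im := by
  have hy := im_one_one_pos_of_mem_SiegelH2 hZ
  have key := im_smul4_embLow_mul_im hg (apply_one_zero_of_mem_SiegelH2 hZ) (jSL_ne_zero hg hy)
  rw [div_le_iff₀ hy, key]
  have := Complex.normSq_nonneg (jSL g (Z 1 1))
  nlinarith

lemma im_smul4_embLow_pos (hg : g.det = 1) (hZ : Z ∈ SiegelH2) :
    0 < (smul4 (embLow g) Z 0 0).im :=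
  (div_pos (Hdelta_pos_of_mem_SiegelH2 hZ) (im_one_one_pos_of_mem_SiegelH2 hZ)).trans_le
    (div_im_le_im_smul4_embLow hg hZ)

lemma norm_smul4_embLow_le (hg : g.det = 1) (hZ : Z ∈ SiegelH2) :
    ‖smul4 (embLow g) Z 0 0‖ ≤ ‖Z 0 0‖ + Complex.normSq (Z 0 1) / (Z 1 1).im := by
  have hy := im_one_one_pos_of_mem_SiegelH2 hZ
  have hj := jSL_ne_zero hg hy
  have hjim : |g 1 0| * (Z 1 1).im ≤ ‖jSL g (Z 1 1)‖ := by
    simpa [im_jSL, abs_mul, abs_of_pos hy] using Complex.abs_im_le_norm (jSL g (Z 1 1))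
  rw [smul4_embLow_zero_zero hg hj, apply_one_zero_of_mem_SiegelH2 hZ]
  refine (norm_sub_le _ _).trans ?_
  gcongr
  rw [norm_div, norm_mul, norm_mul, Complex.norm_real, Real.norm_eq_abs,
    div_le_div_iff₀ (norm_pos_iff.mpr hj) hy, Complex.normSq_eq_norm_sq]
  calc |g 1 0| * ‖Z 0 1‖ * ‖Z 0 1‖ * (Z 1 1).im
      = ‖Z 0 1‖ ^ 2 * (|g 1 0| * (Z 1 1).im) := by ring
    _ ≤ ‖Z 0 1‖ ^ 2 * ‖jSL g (Z 1 1)‖ := by gcongr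

end SiegelH2

lemma Hdelta_cpow_mul_chiF_emb (k : ℤ) (s : ℂ) {g h : M2R} (hg : g.det = 1) (hh : h.det = 1)
    {Z : M2C} (hZ : Z ∈ SiegelH2) :
    (Hdelta Z : ℂ) ^ s * chiF k s (emb g h) Z =
      jfac (embLow h) Z ^ (-k) *
          ((Hdelta (smul4 (embLow h) Z) / (smul4 (embLow h) Z 0 0).im : ℝ) : ℂ) ^ s *
        (jSL g (smul4 (embLow h) Z 0 0) ^ (-k) *
          ((moeb g (smul4 (embLow h) Z 0 0)).im : ℂ) ^ s) := by
  have hy := im_one_one_pos_of_mem_SiegelH2 hZ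
  have hjh := jSL_ne_zero hh hy
  have hHd := Hdelta_smul4_embLow hh (apply_one_zero_of_mem_SiegelH2 hZ) hjh
  have hW := im_smul4_embLow_pos hh hZ
  rw [chiF, jfac_emb_eq_mul hh hjh]
  generalize smul4 (embLow h) Z 0 0 = W₀ at hW ⊢
  have hjg := jSL_ne_zero hg hW
  have key := ofReal_mul_cpow_neg_two_mul_mul_cpow (norm_pos_iff.mpr hjg) (norm_pos_iff.mpr hjh)
    hW (Hdelta_pos_of_mem_SiegelH2 hZ) s
  rw [jfac_embLow, hHd, im_moeb hg, Complex.normSq_eq_norm_sq,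
    Complex.normSq_eq_norm_sq, div_div, norm_mul, mul_zpow]
  linear_combination (jSL g W₀ ^ (-k) * jSL h (Z 1 1) ^ (-k)) * key

lemma GammaInf_apply_one_one {γ : M2R} (hγ : γ ∈ GammaInf) : γ 1 1 = 1 ∨ γ 1 1 = -1 := by
  obtain ⟨⟨hdet, hint⟩, h10⟩ := hγ
  obtain ⟨m, hm⟩ := hint 0 0
  obtain ⟨n, hn⟩ := hint 1 1
  rw [det_fin_two, h10, hm, hn] at hdet
  have hmn : m * n = 1 := by exact_mod_cast (by linarith : (m : ℝ) * n = 1)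
  rcases Int.eq_one_or_neg_one_of_mul_eq_one' hmn with ⟨-, rfl⟩ | ⟨-, rfl⟩ <;> simp [hn]

lemma jSL_mul_of_mem_GammaInf {γ : M2R} (hγ : γ ∈ GammaInf) (h : M2R) (τ : ℂ) :
    jSL (γ * h) τ = γ 1 1 * jSL h τ := by
  simp [jSL, mul_apply, Fin.sum_univ_two, hγ.2]
  ring

lemma AkTerm_mul_of_mem_GammaInf {k : ℤ} (hk : Even k) (s : ℂ) {Z : M2C} (hZ : Z ∈ SiegelH2)
    {γ h : M2R} (hγ : γ ∈ GammaInf) (hh : h.det = 1) :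
    AkTerm k s Z (γ * h) = AkTerm k s Z h := by
  have hγh : (γ * h).det = 1 := by rw [det_mul, hγ.1.1, hh, one_mul]
  have hy := im_one_one_pos_of_mem_SiegelH2 hZ
  have hsymm := apply_one_zero_of_mem_SiegelH2 hZ
  have hε : ((γ 1 1 : ℝ) : ℂ) = 1 ∨ ((γ 1 1 : ℝ) : ℂ) = -1 := by
    rcases GammaInf_apply_one_one hγ with h | h <;> simp [h]
  have hε0 : ((γ 1 1 : ℝ) : ℂ) ≠ 0 := by rcases hε with h | h <;> simp [h]
  have hj := jSL_mul_of_mem_GammaInf hγ h (Z 1 1)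
  have hc : (γ * h) 1 0 = γ 1 1 * h 1 0 := by simp [mul_apply, Fin.sum_univ_two, hγ.2]
  have hW : smul4 (embLow (γ * h)) Z 0 0 = smul4 (embLow h) Z 0 0 := by
    rw [smul4_embLow_zero_zero hγh (jSL_ne_zero hγh hy), smul4_embLow_zero_zero hh
      (jSL_ne_zero hh hy), hj, hc]
    push_cast
    field_simp
  have hHd : Hdelta (smul4 (embLow (γ * h)) Z) = Hdelta (smul4 (embLow h) Z) := by
    rw [Hdelta_smul4_embLow hγh hsymm (jSL_ne_zero hγh hy),
      Hdelta_smul4_embLow hh hsymm (jSL_ne_zero hh hy), hj, Complex.normSq_mul]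
    rcases hε with h | h <;> simp [h]
  have hJ : jfac (embLow (γ * h)) Z ^ (-k) = jfac (embLow h) Z ^ (-k) := by
    rw [jfac_embLow, jfac_embLow, hj, mul_zpow]
    rcases hε with h | h <;> simp [h, hk.neg.neg_one_zpow]
  rw [AkTerm, AkTerm, hW, hHd, hJ]

section Summability

open EisensteinSeries UpperHalfPlane

lemma mul_mem_SL2Zset {g h : M2R} (hg : g ∈ SL2Zset) (hh : h ∈ SL2Zset) :
    g * h ∈ SL2Zset := by
  refine ⟨by rw [det_mul, hg.1, hh.1, one_mul], fun i j => ?_⟩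
  obtain ⟨a, ha⟩ := hg.2 i 0
  obtain ⟨b, hb⟩ := hg.2 i 1
  obtain ⟨c, hc⟩ := hh.2 0 j
  obtain ⟨d, hd⟩ := hh.2 1 j
  exact ⟨a * c + b * d, by simp [mul_apply, Fin.sum_univ_two, ha, hb, hc, hd]⟩

lemma adjugate_mem_SL2Zset {g : M2R} (hg : g ∈ SL2Zset) : adjugate g ∈ SL2Zset := by
  refine ⟨by simp [det_adjugate, hg.1], fun i j => ?_⟩
  obtain ⟨n, hn⟩ := hg.2 (1 - j) (1 - i)
  refine ⟨if i = j then n else -n, ?_⟩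
  fin_cases i <;> fin_cases j <;> simp_all [adjugate_fin_two]

lemma relInf_of_bottom_row_eq {g g' : SL2ZT} (h0 : g.1 1 0 = g'.1 1 0) (h1 : g.1 1 1 = g'.1 1 1) :
    relInf g g' := by
  refine ⟨g'.1 * adjugate g.1, ⟨mul_mem_SL2Zset g'.2 (adjugate_mem_SL2Zset g.2), ?_⟩, ?_⟩
  · simp [adjugate_fin_two, mul_apply, Fin.sum_univ_two, h0, h1]
    ring
  · rw [Matrix.mul_assoc, adjugate_mul, g.2.1, one_smul, Matrix.mul_one]

def bottomRow (g : M2R) : Fin 2 → ℤ := ![⌊g 1 0⌋, ⌊g 1 1⌋]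

lemma bottomRow_cast {g : M2R} (hg : g ∈ SL2Zset) (i : Fin 2) :
    (bottomRow g i : ℝ) = g 1 i := by
  obtain ⟨n, hn⟩ := hg.2 1 i
  fin_cases i <;> simp_all [bottomRow]

lemma jSL_eq_bottomRow {g : M2R} (hg : g ∈ SL2Zset) (τ : ℂ) :
    jSL g τ = (bottomRow g 0 : ℂ) * τ + bottomRow g 1 := by
  simp only [jSL, ← bottomRow_cast hg, Complex.ofReal_intCast]

lemma qout_mk {α : Sort*} {r : α → α → Prop} (q : Quot r) : Quot.mk r (qout q) = q :=
  Classical.choose_spec (Quot.exists_rep q)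

lemma injective_bottomRow_qout :
    Function.Injective fun q : Quot relInf => bottomRow (qout q).1 := by
  intro q q' (h : bottomRow (qout q).1 = bottomRow (qout q').1)
  rw [← qout_mk q, ← qout_mk q']
  have hrow (i : Fin 2) : (qout q).1 1 i = (qout q').1 1 i := by
    rw [← bottomRow_cast (qout q).2, ← bottomRow_cast (qout q').2, h]
  exact Quot.sound (relInf_of_bottom_row_eq (hrow 0) (hrow 1))

lemma norm_jSL_rpow_le {g : M2R} (hg : g ∈ SL2Zset) {α : ℝ} (hα : 0 ≤ α) {A B : ℝ}
    (hB : 0 < B) {z : ℍ} (hz : z ∈ verticalStrip A B) :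
    ‖jSL g z‖ ^ (-α) ≤ r ⟨⟨A, B⟩, hB⟩ ^ (-α) * ‖bottomRow g‖ ^ (-α) := by
  rw [jSL_eq_bottomRow hg]
  exact summand_bound_of_mem_verticalStrip hα _ hB hz

lemma smul4_embLow_mem_verticalStrip {g : M2R} (hg : g.det = 1) {Z : M2C} (hZ : Z ∈ SiegelH2) :
    (⟨smul4 (embLow g) Z 0 0, im_smul4_embLow_pos hg hZ⟩ : ℍ) ∈
      verticalStrip (‖Z 0 0‖ + Complex.normSq (Z 0 1) / (Z 1 1).im) (Hdelta Z / (Z 1 1).im) :=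
  ⟨(Complex.abs_re_le_norm _).trans (norm_smul4_embLow_le hg hZ),
    div_im_le_im_smul4_embLow hg hZ⟩

lemma norm_chiF_emb (k : ℤ) (s : ℂ) {g h : M2R} (hg : g.det = 1) (hh : h.det = 1) {Z : M2C}
    (hZ : Z ∈ SiegelH2) :
    ‖chiF k s (emb g h) Z‖ =
      ‖jSL g (smul4 (embLow h) Z 0 0)‖ ^ (-(k + 2 * s.re)) *
        ‖jSL h (Z 1 1)‖ ^ (-(k + 2 * s.re)) := by
  have hjh := jSL_ne_zero hh (im_one_one_pos_of_mem_SiegelH2 hZ)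
  have hjg := jSL_ne_zero hg (im_smul4_embLow_pos hh hZ)
  rw [chiF, norm_zpow_neg_mul_cpow_norm k s (jfac_emb_eq_mul hh hjh ▸ mul_ne_zero hjg hjh),
    jfac_emb_eq_mul hh hjh, norm_mul, Real.mul_rpow (norm_nonneg _) (norm_nonneg _)]

lemma summable_norm_chiF_emb (k : ℤ) (s : ℂ) (hs : 2 < k + 2 * s.re) {Z : M2C}
    (hZ : Z ∈ SiegelH2) :
    Summable fun p : Quot relInf × Quot relInf =>
      ‖chiF k s (emb (qout p.1).1 (qout p.2).1) Z‖ := by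
  set α : ℝ := k + 2 * s.re
  have hα : 0 ≤ α := by linarith
  have hy := im_one_one_pos_of_mem_SiegelH2 hZ
  have hB : 0 < Hdelta Z / (Z 1 1).im := div_pos (Hdelta_pos_of_mem_SiegelH2 hZ) hy
  let zW : ℍ := ⟨⟨‖Z 0 0‖ + Complex.normSq (Z 0 1) / (Z 1 1).im, Hdelta Z / (Z 1 1).im⟩, hB⟩
  let zτ : ℍ := ⟨⟨|(Z 1 1).re|, (Z 1 1).im⟩, hy⟩
  have hrow : Summable fun x : Fin 2 → ℤ => ‖x‖ ^ (-α) := summable_one_div_norm_rpow hs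
  have hrow₂ := hrow.mul_of_nonneg hrow (fun _ => by positivity) (fun _ => by positivity)
  have hmaj := (hrow₂.comp_injective (injective_bottomRow_qout.prodMap injective_bottomRow_qout)).mul_left
    (r zW ^ (-α) * r zτ ^ (-α))
  refine hmaj.of_nonneg_of_le (fun _ => norm_nonneg _) fun p => ?_
  have hg := (qout p.1).2
  have hh := (qout p.2).2
  rw [norm_chiF_emb k s hg.1 hh.1 hZ]
  calc _ ≤ (r zW ^ (-α) * ‖bottomRow (qout p.1).1‖ ^ (-α)) *
        (r zτ ^ (-α) * ‖bottomRow (qout p.2).1‖ ^ (-α)) :=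
        mul_le_mul (norm_jSL_rpow_le hg hα hB (smul4_embLow_mem_verticalStrip hh.1 hZ))
          (norm_jSL_rpow_le hh (z := ⟨Z 1 1, hy⟩) hα hy ⟨le_rfl, le_rfl⟩)
          (Real.rpow_nonneg (norm_nonneg _) _) (by have := r_pos zW; positivity)
    _ = _ := by simp only [Function.comp, Prod.map]; ring

end Summability

lemma AkTerm_eq_Hdelta_cpow_mul_tsum (k : ℤ) (s : ℂ) {Z : M2C} (hZ : Z ∈ SiegelH2) {h : M2R}
    (hh : h.det = 1) :
    AkTerm k s Z h =
      (Hdelta Z : ℂ) ^ s * ∑' q : Quot relInf, chiF k s (emb (qout q).1 h) Z := by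
  rw [← tsum_mul_left,
    tsum_congr fun q : Quot relInf => Hdelta_cpow_mul_chiF_emb k s (qout q).2.1 hh hZ,
    tsum_mul_left, AkTerm, E1]

/-- `A_k(Z,s)` as a sum of degree 1 real analytic Eisenstein series. -/
theorem Ak_as_sum_of_E1 (k : ℤ) (hk : Even k) (s : ℂ) (hs : 2 * s.re + (k : ℝ) > 3)
    (Z : M2C) (hZ : Z ∈ SiegelH2) :
    (∀ h : SL2ZT, 0 < ((smul4 (embLow h.1) Z) 0 0).im) ∧
    (∀ h h' : SL2ZT, relInf h h' → AkTerm k s Z h.1 = AkTerm k s Z h'.1) ∧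
    Summable (fun q : Quot relInf => ‖AkTerm k s Z (qout q).1‖) ∧
    Ak k s Z = ∑' q : Quot relInf, AkTerm k s Z (qout q).1 := by
  have hs' : 2 < (k : ℝ) + 2 * s.re := by linarith
  have hF := summable_norm_chiF_emb k s hs' hZ
  have hterm (q : Quot relInf) : AkTerm k s Z (qout q).1 =
      (Hdelta Z : ℂ) ^ s * ∑' q' : Quot relInf, chiF k s (emb (qout q').1 (qout q).1) Z :=
    AkTerm_eq_Hdelta_cpow_mul_tsum k s hZ (qout q).2.1
  refine ⟨fun h => im_smul4_embLow_pos h.2.1 hZ, ?_, ?_, ?_⟩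
  · rintro h h' ⟨γ, hγ, hh'⟩
    rw [hh', AkTerm_mul_of_mem_GammaInf hk s hZ hγ h.2.1]
  · simp_rw [hterm, norm_mul]
    exact (summable_norm_tsum_fst hF).mul_left _
  · simp_rw [Ak, embUp_mul_embLow, hterm, tsum_mul_left, hF.of_norm.tsum_prod]
    exact congrArg _ (Summable.tsum_comm
      (f := fun b c : Quot relInf => chiF k s (emb (qout b).1 (qout c).1) Z) hF.of_norm).symm

end
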